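/- arXiv:1108.1846 — 3 statements merged into one kernel-verified Lean document; each statement's English description precedes it below -/
import Mathlib

section
/- For every finite set S = {s₁, …, s_ν} ⊂ ℂ there exists a polynomial q ∈ ℝ[t] of degree 2^ν such that q(S) ⊂ ℝ and all critical values of q (values q(c) with q′(c) = 0) are real. Moreover, q can be taken as an iterated composition of maps t ↦ (t + μ_j)² with real shifts μ_j. -/
open Polynomial

/-- The iterated shift-and-square polynomial determined by a list of real shifts:
`foldPoly [μ₁, …, μ_ν]` is the composition of the maps `t ↦ (t + μⱼ)²` applied to `t`. -/
noncomputable def foldPoly (μs : List ℝ) : Polynomial ℝ :=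
  μs.foldl (fun p μ => (p + Polynomial.C μ) ^ 2) Polynomial.X

lemma foldl_eq_comp (μs : List ℝ) (p : Polynomial ℝ) :
    μs.foldl (fun p μ => (p + Polynomial.C μ) ^ 2) p = (foldPoly μs).comp p := by
  induction μs generalizing p with
  | nil => simp [foldPoly]
  | cons μ μs ih =>
    simp only [List.foldl_cons, foldPoly] at *
    rw [ih ((p + C μ)^2), ih ((X + C μ)^2), Polynomial.comp_assoc]
    simp

lemma foldPoly_cons (μ : ℝ) (μs : List ℝ) :
    foldPoly (μ :: μs) = (foldPoly μs).comp ((X + C μ)^2) := by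
  rw [foldPoly, List.foldl_cons, foldl_eq_comp]

lemma foldPoly_natDegree (μs : List ℝ) : (foldPoly μs).natDegree = 2 ^ μs.length := by
  induction μs with
  | nil => simp [foldPoly]
  | cons μ μs ih =>
    rw [foldPoly_cons, natDegree_comp, ih, natDegree_pow, natDegree_X_add_C]
    simp [pow_succ]

lemma foldPoly_concat_zero (μs : List ℝ) :
    foldPoly (μs ++ [0]) = (foldPoly μs)^2 := by
  simp [foldPoly, List.foldl_append]

lemma sq_im {z : ℂ} (h : z.im = 0) : (z^2).im = 0 := by
  simp [sq, Complex.mul_im, h]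

lemma aeval_real (q : Polynomial ℝ) (r : ℝ) : (Polynomial.aeval (r : ℂ) q).im = 0 := by
  have : (r : ℂ) = algebraMap ℝ ℂ r := rfl
  rw [this, aeval_algebraMap_apply]
  simp

lemma foldPoly_pad (μs : List ℝ) (k : ℕ) (T : Finset ℂ)
    (hv : ∀ s ∈ T, (Polynomial.aeval s (foldPoly μs)).im = 0)
    (hc : ∀ c : ℂ, Polynomial.aeval c (Polynomial.derivative (foldPoly μs)) = 0 →
      (Polynomial.aeval c (foldPoly μs)).im = 0) :
    (∀ s ∈ T, (Polynomial.aeval s (foldPoly (μs ++ List.replicate k 0))).im = 0) ∧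
    (∀ c : ℂ, Polynomial.aeval c (Polynomial.derivative (foldPoly (μs ++ List.replicate k 0))) = 0 →
      (Polynomial.aeval c (foldPoly (μs ++ List.replicate k 0))).im = 0) := by
  induction k with
  | zero => simpa using ⟨hv, hc⟩
  | succ k ih =>
    obtain ⟨ihv, ihc⟩ := ih
    have hrep : μs ++ List.replicate (k+1) 0 = (μs ++ List.replicate k 0) ++ [(0:ℝ)] := by
      rw [List.replicate_succ', ← List.append_assoc]
    rw [hrep]
    set q := foldPoly (μs ++ List.replicate k 0) with hq
    have hsq : foldPoly ((μs ++ List.replicate k 0) ++ [(0:ℝ)]) = q ^ 2 :=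
      foldPoly_concat_zero _
    constructor
    · intro s hs
      rw [hsq, map_pow]
      exact sq_im (ihv s hs)
    · intro c hcrit
      rw [hsq, map_pow]
      apply sq_im
      rw [hsq, derivative_sq, map_mul, map_mul] at hcrit
      rcases mul_eq_zero.mp hcrit with h | h
      · rcases mul_eq_zero.mp h with h2 | h2
        · simp at h2
        · rw [h2]; simp
      · exact ihc c h

/-- For every finite set `S ⊂ ℂ` of cardinality `ν` there is a folding polynomial
`q ∈ ℝ[t]` of degree `2^ν`, an iterated composition of maps `t ↦ (t + μⱼ)²` with real
shifts, such that `q(S) ⊂ ℝ` and all critical values of `q` are real. -/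
theorem exists_folding_polynomial (S : Finset ℂ) :
    ∃ μs : List ℝ, μs.length = S.card ∧
      (foldPoly μs).natDegree = 2 ^ S.card ∧
      (∀ s ∈ S, (Polynomial.aeval s (foldPoly μs)).im = 0) ∧
      (∀ c : ℂ, Polynomial.aeval c (Polynomial.derivative (foldPoly μs)) = 0 →
        (Polynomial.aeval c (foldPoly μs)).im = 0) := by
  suffices H : ∀ n (S : Finset ℂ), S.card = n →
      ∃ μs : List ℝ, μs.length = n ∧
        (∀ s ∈ S, (Polynomial.aeval s (foldPoly μs)).im = 0) ∧
        (∀ c : ℂ, Polynomial.aeval c (Polynomial.derivative (foldPoly μs)) = 0 →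
          (Polynomial.aeval c (foldPoly μs)).im = 0) by
    obtain ⟨μs, h1, h2, h3⟩ := H S.card S rfl
    exact ⟨μs, h1, by rw [foldPoly_natDegree, h1], h2, h3⟩
  intro n
  induction n using Nat.strong_induction_on with
  | _ n ih =>
    intro S hS
    rcases n with _ | m
    · have : S = ∅ := Finset.card_eq_zero.mp hS
      subst this
      refine ⟨[], rfl, by simp, ?_⟩
      intro c hc
      simp [foldPoly] at hc
    · have hne : S.Nonempty := Finset.card_pos.mp (by omega)
      obtain ⟨s, hs⟩ := hne
      set μ : ℝ := -s.re with hμ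
      set S' : Finset ℂ := (S.erase s).image (fun z => (z + (μ:ℂ))^2) with hS'
      have hcard : S'.card ≤ m := le_trans Finset.card_image_le
        (by rw [Finset.card_erase_of_mem hs, hS]; omega)
      obtain ⟨μs', hlen', hv', hc'⟩ := ih S'.card (by omega) S' rfl
      obtain ⟨hv'', hc''⟩ := foldPoly_pad μs' (m - S'.card) S' hv' hc'
      set μs'' := μs' ++ List.replicate (m - S'.card) 0 with hμs''
      have hlen'' : μs''.length = m := by
        simp only [hμs'', List.length_append, List.length_replicate, hlen']
        omega
      have hcomp : ∀ z : ℂ, Polynomial.aeval z (foldPoly (μ :: μs''))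
          = Polynomial.aeval ((z + (μ:ℂ))^2) (foldPoly μs'') := by
        intro z
        rw [foldPoly_cons, aeval_comp]
        simp
      refine ⟨μ :: μs'', by simp [hlen''], ?_, ?_⟩
      · intro t ht
        rw [hcomp]
        rcases eq_or_ne t s with rfl | hts
        · have hpt : (t + (μ:ℂ))^2 = ((-(t.im^2) : ℝ) : ℂ) := by
            apply Complex.ext <;>
              simp [sq, Complex.mul_re, Complex.mul_im, hμ]
          rw [hpt]
          exact aeval_real _ _
        · exact hv'' _ (Finset.mem_image_of_mem _ (Finset.mem_erase.mpr ⟨hts, ht⟩))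
      · intro c hcrit
        rw [foldPoly_cons, derivative_comp, map_mul, aeval_comp] at hcrit
        rcases mul_eq_zero.mp hcrit with h | h
        · have hc0 : c = ((-μ : ℝ) : ℂ) := by
            simp [derivative_sq] at h
            push_cast
            linear_combination h
          rw [hc0]
          exact aeval_real _ _
        · rw [hcomp]
          apply hc''
          convert h using 2
          simp
end

section
/- Let g be holomorphic and nonvanishing on a neighborhood of t₀ ∈ ℂ, let μ ∈ ℤ, and set f(t) = (t − t₀)^μ · g(t). For ε > 0 and α ∈ (0, 2π], let γ_ε be the circular arc t₀ + ε·e^{iθ}, θ ∈ [θ₀, θ₀ + α]. Then the variation of argument of f along γ_ε tends to α·μ as ε → 0. -/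
open Complex Filter

lemma aux_const_of_two_pi_int (a b : ℝ) (hab : a ≤ b) (h : ℝ → ℝ)
    (hc : ContinuousOn h (Set.Icc a b))
    (hint : ∀ x ∈ Set.Icc a b, ∃ n : ℤ, h x = n * (2 * Real.pi)) :
    h b = h a := by
  have hπ := Real.pi_pos
  obtain ⟨n, hn⟩ := hint a (Set.left_mem_Icc.2 hab)
  obtain ⟨m, hm⟩ := hint b (Set.right_mem_Icc.2 hab)
  rcases lt_trichotomy n m with hnm | hnm | hnm
  · exfalso
    have hnm' : (n:ℝ) + 1 ≤ m := by exact_mod_cast hnm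
    have hc1 : ((2*n+1 : ℤ) : ℝ) * Real.pi ∈ Set.Icc (h a) (h b) := by
      rw [hn, hm]
      constructor
      · push_cast; nlinarith
      · push_cast; nlinarith
    obtain ⟨x, hx, hhx⟩ := intermediate_value_Icc hab hc hc1
    obtain ⟨k, hk⟩ := hint x hx
    rw [hk] at hhx
    have h2 : (2*k : ℝ) = 2*n+1 := by
      have := mul_right_cancel₀ (ne_of_gt hπ) (by push_cast at hhx ⊢; linarith : (2*k : ℝ) * Real.pi = ((2*n+1:ℝ)) * Real.pi)
      linarith
    have : (2*k : ℤ) = 2*n+1 := by exact_mod_cast h2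
    omega
  · rw [hn, hm, hnm]
  · exfalso
    have hnm' : (m:ℝ) + 1 ≤ n := by exact_mod_cast hnm
    have hc1 : ((2*m+1 : ℤ) : ℝ) * Real.pi ∈ Set.Icc (h b) (h a) := by
      rw [hn, hm]
      constructor
      · push_cast; nlinarith
      · push_cast; nlinarith
    obtain ⟨x, hx, hhx⟩ := intermediate_value_Icc' hab hc hc1
    obtain ⟨k, hk⟩ := hint x hx
    rw [hk] at hhx
    have h2 : (2*k : ℝ) = 2*m+1 := by
      have := mul_right_cancel₀ (ne_of_gt hπ) (by push_cast at hhx ⊢; linarith : (2*k : ℝ) * Real.pi = ((2*m+1:ℝ)) * Real.pi)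
      linarith
    have : (2*k : ℤ) = 2*m+1 := by exact_mod_cast h2
    omega

/-- If `f(t) = (t − t₀)^μ · g(t)` with `g` holomorphic and nonvanishing near `t₀`, then
the variation of argument of `f` along the circular arc `t₀ + ε e^{iθ}`,
`θ ∈ [θ₀, θ₀ + α]`, tends to `α·μ` as `ε → 0⁺`. -/
theorem vararg_arc_tendsto_order
    (V : Set ℂ) (hV : IsOpen V) (t₀ : ℂ) (ht₀ : t₀ ∈ V)
    (g : ℂ → ℂ) (hg : DifferentiableOn ℂ g V) (hg0 : ∀ z ∈ V, g z ≠ 0)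
    (μ : ℤ) (f : ℂ → ℂ) (hf : ∀ t, f t = (t - t₀) ^ μ * g t)
    (θ₀ α : ℝ) (hα : 0 < α) (hα2 : α ≤ 2 * Real.pi)
    (ε₀ : ℝ) (hε₀ : 0 < ε₀) (hball : Metric.ball t₀ ε₀ ⊆ V)
    (Θ : ℝ → ℝ → ℝ)
    (hΘcont : ∀ ε ∈ Set.Ioo (0:ℝ) ε₀, ContinuousOn (Θ ε) (Set.Icc θ₀ (θ₀ + α)))
    (hΘarg : ∀ ε ∈ Set.Ioo (0:ℝ) ε₀, ∀ θ ∈ Set.Icc θ₀ (θ₀ + α),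
      f (t₀ + ε * exp (I * θ)) =
        (‖f (t₀ + ε * exp (I * θ))‖ : ℂ) * exp (I * Θ ε θ)) :
    Tendsto (fun ε => Θ ε (θ₀ + α) - Θ ε θ₀)
      (nhdsWithin 0 (Set.Ioo 0 ε₀)) (nhds (α * (μ : ℝ))) := by
  have hπ := Real.pi_pos
  have hab : θ₀ ≤ θ₀ + α := by linarith
  have hgt₀ : g t₀ ≠ 0 := hg0 t₀ ht₀
  have hgc : ContinuousAt g t₀ := (hg.differentiableAt (hV.mem_nhds ht₀)).continuousAt
  have h1 : Tendsto (fun z => (g z / g t₀).re) (nhds t₀) (nhds 1) := by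
    have : ContinuousAt (fun z => (g z / g t₀).re) t₀ :=
      Complex.continuous_re.continuousAt.comp (hgc.div_const _)
    simpa [div_self hgt₀] using this.tendsto
  have h2 : ∀ᶠ z in nhds t₀, 0 < (g z / g t₀).re := h1.eventually (eventually_gt_nhds one_pos)
  have h3 : ∀ᶠ z in nhds t₀, 0 < (g z / g t₀).re ∧ z ∈ V := h2.and (hV.mem_nhds ht₀)
  obtain ⟨ε₁, hε₁pos, hball₁⟩ := Metric.eventually_nhds_iff_ball.1 h3
  set ε₂ := min ε₁ ε₀ with hε₂def
  have hε₂pos : 0 < ε₂ := lt_min hε₁pos hε₀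
  have hε₂ε₀ : ε₂ ≤ ε₀ := min_le_right _ _
  have key : ∀ ε ∈ Set.Ioo (0:ℝ) ε₂,
      Θ ε (θ₀ + α) - Θ ε θ₀ =
        α * μ + ((g (t₀ + ε * exp (I * (↑θ₀ + ↑α))) / g t₀).arg
          - (g (t₀ + ε * exp (I * θ₀)) / g t₀).arg) := by
    intro ε hε
    obtain ⟨hε0, hεlt⟩ := hε
    have hε₀mem : ε ∈ Set.Ioo (0:ℝ) ε₀ := ⟨hε0, lt_of_lt_of_le hεlt hε₂ε₀⟩
    set z : ℝ → ℂ := fun θ => t₀ + ε * exp (I * θ) with hz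
    have hzmem : ∀ θ : ℝ, 0 < (g (z θ) / g t₀).re ∧ z θ ∈ V := by
      intro θ
      apply hball₁
      have habs1 : ‖(ε : ℂ) * exp (I * θ)‖ = ε := by
        rw [norm_mul, Complex.norm_real, Real.norm_eq_abs, abs_of_pos hε0, Complex.norm_exp]
        simp [Complex.mul_re]
      simp only [hz, Metric.mem_ball, Complex.dist_eq, add_sub_cancel_left]
      rw [habs1]
      exact lt_of_lt_of_le hεlt (min_le_left _ _)
    set Ψ : ℝ → ℝ := fun θ => μ * θ + (g t₀).arg + (g (z θ) / g t₀).arg with hΨ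
    have habsgne : (‖g t₀‖ : ℂ) ≠ 0 := by simpa using hgt₀
    have hexp : ∀ θ ∈ Set.Icc θ₀ (θ₀ + α), exp (I * Θ ε θ) = exp (I * Ψ θ) := by
      intro θ hθ
      have hgz : g (z θ) ≠ 0 := hg0 _ (hzmem θ).2
      have hwne : g (z θ) / g t₀ ≠ 0 := div_ne_zero hgz hgt₀
      have habswne : (‖g (z θ) / g t₀‖ : ℂ) ≠ 0 := by simpa using hwne
      have hεC : (ε : ℂ) ≠ 0 := by exact_mod_cast ne_of_gt hε0
      have hbase : (ε : ℂ) * exp (I * θ) ≠ 0 := mul_ne_zero hεC (Complex.exp_ne_zero _)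
      have hfz : f (z θ) = ((ε : ℂ) * exp (I * θ)) ^ μ * g (z θ) := by
        rw [hf]; congr 1; simp [hz]
      have hfne : f (z θ) ≠ 0 := by
        rw [hfz]; exact mul_ne_zero (zpow_ne_zero μ hbase) hgz
      have habsne : (‖f (z θ)‖ : ℂ) ≠ 0 := by simpa using hfne
      have habsR : ‖f (z θ)‖
          = ε ^ μ * (‖g t₀‖ * ‖g (z θ) / g t₀‖) := by
        rw [hfz, norm_mul, norm_zpow, norm_mul, Complex.norm_real, Real.norm_eq_abs, abs_of_pos hε0,
          Complex.norm_exp]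
        have h5 : Real.exp ((I * (θ:ℂ)).re) = 1 := by simp [Complex.mul_re]
        rw [h5, mul_one]
        rw [norm_div, mul_comm ‖g t₀‖, div_mul_cancel₀ _ (by simpa using hgt₀)]
      have habs : (‖f (z θ)‖ : ℂ)
          = (ε : ℂ) ^ μ * ((‖g t₀‖ : ℂ) * (‖g (z θ) / g t₀‖ : ℂ)) := by
        rw [habsR]; push_cast; ring
      have hsplit : exp (I * (Ψ θ : ℝ)) =
          exp (I * θ) ^ μ * (exp ((g t₀).arg * I) * exp ((g (z θ) / g t₀).arg * I)) := by
        rw [← Complex.exp_int_mul, ← Complex.exp_add, ← Complex.exp_add]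
        congr 1
        simp only [hΨ]
        push_cast
        ring
      have hmain : f (z θ) = (‖f (z θ)‖ : ℂ) * exp (I * Ψ θ) := by
        rw [habs, hsplit]
        symm
        calc (ε : ℂ) ^ μ * ((‖g t₀‖ : ℂ) * (‖g (z θ) / g t₀‖ : ℂ)) *
              (exp (I * θ) ^ μ * (exp ((g t₀).arg * I) * exp ((g (z θ) / g t₀).arg * I)))
            = ((ε : ℂ) ^ μ * exp (I * θ) ^ μ) *
              (((‖g t₀‖ : ℂ) * exp ((g t₀).arg * I)) *
               ((‖g (z θ) / g t₀‖ : ℂ) * exp ((g (z θ) / g t₀).arg * I))) := by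
              ring
          _ = ((ε : ℂ) * exp (I * θ)) ^ μ * (g t₀ * (g (z θ) / g t₀)) := by
              rw [mul_zpow, Complex.norm_mul_exp_arg_mul_I, Complex.norm_mul_exp_arg_mul_I]
          _ = f (z θ) := by
              rw [hfz, mul_comm (g t₀), div_mul_cancel₀ _ hgt₀]
      have := (hΘarg ε hε₀mem θ hθ).symm.trans hmain
      exact mul_left_cancel₀ habsne this
    have hzc : Continuous z := by
      exact continuous_const.add (continuous_const.mul
        (Complex.continuous_exp.comp (continuous_const.mul Complex.continuous_ofReal)))
    have hwcont : ContinuousOn (fun θ => g (z θ) / g t₀) (Set.Icc θ₀ (θ₀ + α)) := by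
      apply ContinuousOn.div_const
      exact hg.continuousOn.comp hzc.continuousOn (fun θ _ => (hzmem θ).2)
    have hargcont : ContinuousOn (fun θ => (g (z θ) / g t₀).arg) (Set.Icc θ₀ (θ₀ + α)) := by
      intro θ hθ
      show ContinuousWithinAt (Complex.arg ∘ (fun θ => g (z θ) / g t₀)) _ θ
      exact ContinuousAt.comp_continuousWithinAt
        (Complex.continuousAt_arg (Or.inl (hzmem θ).1)) (hwcont θ hθ)
    have hΨcont : ContinuousOn Ψ (Set.Icc θ₀ (θ₀ + α)) := by
      exact (((continuous_const.mul continuous_id).continuousOn.add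
        continuousOn_const).add hargcont)
    have hconst := aux_const_of_two_pi_int θ₀ (θ₀ + α) hab (fun θ => Θ ε θ - Ψ θ)
      ((hΘcont ε hε₀mem).sub hΨcont) ?_
    · simp only [hΨ, hz] at hconst
      push_cast at hconst ⊢
      linarith
    · intro θ hθ
      obtain ⟨n, hn⟩ := Complex.exp_eq_exp_iff_exists_int.1 (hexp θ hθ)
      refine ⟨n, ?_⟩
      have hI : (I : ℂ) * (Θ ε θ) = I * ((Ψ θ : ℝ) + n * (2 * Real.pi)) := by
        rw [hn]; push_cast; ring
      have h6 : (Θ ε θ : ℂ) = ((Ψ θ + n * (2 * Real.pi) : ℝ) : ℂ) := by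
        have := mul_left_cancel₀ Complex.I_ne_zero hI
        push_cast
        exact this
      have h7 : Θ ε θ = Ψ θ + n * (2 * Real.pi) := by exact_mod_cast h6
      show Θ ε θ - Ψ θ = n * (2 * Real.pi)
      linarith
  have hargtend : ∀ c : ℂ, Tendsto (fun ε : ℝ => (g (t₀ + ε * c) / g t₀).arg)
      (nhds 0) (nhds 0) := by
    intro c
    have h0 : Tendsto (fun ε : ℝ => g (t₀ + ε * c) / g t₀) (nhds 0) (nhds 1) := by
      have hzc : Continuous (fun ε : ℝ => t₀ + (ε : ℂ) * c) :=
        continuous_const.add (Complex.continuous_ofReal.mul continuous_const)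
      have hz : Tendsto (fun ε : ℝ => t₀ + (ε : ℂ) * c) (nhds 0) (nhds t₀) := by
        simpa using hzc.tendsto 0
      have := (hgc.tendsto.comp hz).div_const (g t₀)
      simpa [div_self hgt₀] using this
    have harg : ContinuousAt Complex.arg 1 :=
      Complex.continuousAt_arg (Or.inl (by norm_num))
    have := harg.tendsto.comp h0
    simpa [Complex.arg_one, Function.comp_def] using this
  have hlim : Tendsto (fun ε : ℝ => α * (μ : ℝ) +
      ((g (t₀ + ε * exp (I * (↑θ₀ + ↑α))) / g t₀).arg
        - (g (t₀ + ε * exp (I * θ₀)) / g t₀).arg))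
      (nhdsWithin 0 (Set.Ioo 0 ε₀)) (nhds (α * (μ : ℝ))) := by
    have h8 := (tendsto_const_nhds (x := α * (μ:ℝ)) (f := (nhds (0:ℝ)))).add
      ((hargtend (exp (I * (↑θ₀ + ↑α)))).sub (hargtend (exp (I * θ₀))))
    rw [sub_self, add_zero] at h8
    exact h8.mono_left nhdsWithin_le_nhds
  apply hlim.congr'
  have hev1 : ∀ᶠ ε in nhdsWithin (0:ℝ) (Set.Ioo 0 ε₀), ε < ε₂ :=
    eventually_nhdsWithin_of_eventually_nhds (eventually_lt_nhds hε₂pos)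
  have hev2 : ∀ᶠ ε in nhdsWithin (0:ℝ) (Set.Ioo 0 ε₀), ε ∈ Set.Ioo (0:ℝ) ε₀ :=
    eventually_mem_nhdsWithin
  filter_upwards [hev1, hev2] with ε h₁ h₂
  exact (key ε ⟨h₂.1, h₁⟩).symm
end

section
/- Let S ⊂ ℂ be finite with |S| = ν, and let q be the composition of ν shift-and-square maps constructed inductively as follows: at step j, if the current image set S_j contains a non-real point s, apply t ↦ (t + μ_j)² with μ_j = −Re s; otherwise apply it with μ_j = 0. Then the final image set S_ν = q(S) is contained in ℝ, and at each step j the number of non-real points of S_j is at most ν − j. -/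
/-- The sequence of images of a finite set under the iterated shift-and-square maps
`z ↦ (z + μⱼ)²`. -/
noncomputable def Sseq (μ : ℕ → ℝ) (S : Finset ℂ) : ℕ → Finset ℂ
  | 0 => S
  | j + 1 => (Sseq μ S j).image (fun z => (z + (μ j : ℂ)) ^ 2)

open Classical in
noncomputable def stepShift (A : Finset ℂ) : ℝ :=
  if h : ∃ s ∈ A, s.im ≠ 0 then -(h.choose).re else 0

noncomputable def Tseq (S : Finset ℂ) : ℕ → Finset ℂ
  | 0 => S
  | j + 1 => (Tseq S j).image (fun z => (z + (stepShift (Tseq S j) : ℂ)) ^ 2)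

lemma Sseq_eq_Tseq (S : Finset ℂ) (j : ℕ) :
    Sseq (fun k => stepShift (Tseq S k)) S j = Tseq S j := by
  induction j with
  | zero => rfl
  | succ j ih => simp [Sseq, Tseq, ih]

lemma sq_im_eq (w : ℂ) : (w ^ 2).im = 2 * w.re * w.im := by
  simp [sq, Complex.mul_im]; ring

open Classical in
lemma key_step (A : Finset ℂ) :
    let B := A.image (fun z => (z + (stepShift A : ℂ)) ^ 2)
    (B.filter (fun z => z.im ≠ 0)).card + 1 ≤ (A.filter (fun z => z.im ≠ 0)).card ∨
    ((∀ s ∈ A, s.im = 0) ∧ stepShift A = 0 ∧ ∀ z ∈ B, z.im = 0) := by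
  intro B
  by_cases h : ∃ s ∈ A, s.im ≠ 0
  · left
    obtain ⟨hs, him⟩ := h.choose_spec
    set s := h.choose with hsdef
    have hμ : stepShift A = -s.re := by rw [stepShift, dif_pos h]
    have hsub : B.filter (fun z => z.im ≠ 0) ⊆
        ((A.filter (fun z => z.im ≠ 0)).erase s).image
          (fun z => (z + (stepShift A : ℂ)) ^ 2) := by
      intro w hw
      simp only [Finset.mem_filter, B, Finset.mem_image] at hw
      obtain ⟨⟨z, hzA, hzw⟩, hwim⟩ := hw
      have hzim : z.im ≠ 0 := by
        intro h0
        apply hwim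
        rw [← hzw, sq_im_eq]
        simp [h0]
      have hzs : z ≠ s := by
        intro h0
        apply hwim
        rw [← hzw, sq_im_eq, h0, hμ]
        simp
      refine Finset.mem_image.2 ⟨z, Finset.mem_erase.2 ⟨hzs, Finset.mem_filter.2 ⟨hzA, hzim⟩⟩, hzw⟩
    have hsm : s ∈ A.filter (fun z => z.im ≠ 0) := Finset.mem_filter.2 ⟨hs, him⟩
    have h1 : 1 ≤ (A.filter (fun z => z.im ≠ 0)).card := Finset.card_pos.2 ⟨s, hsm⟩
    calc (B.filter (fun z => z.im ≠ 0)).card + 1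
        ≤ (((A.filter (fun z => z.im ≠ 0)).erase s).image
          (fun z => (z + (stepShift A : ℂ)) ^ 2)).card + 1 :=
          Nat.add_le_add_right (Finset.card_le_card hsub) 1
      _ ≤ ((A.filter (fun z => z.im ≠ 0)).erase s).card + 1 :=
          Nat.add_le_add_right (Finset.card_image_le) 1
      _ = ((A.filter (fun z => z.im ≠ 0)).card - 1) + 1 := by
          rw [Finset.card_erase_of_mem hsm]
      _ = (A.filter (fun z => z.im ≠ 0)).card := Nat.succ_pred_eq_of_pos h1
  · right
    push_neg at h
    have hμ : stepShift A = 0 := by rw [stepShift, dif_neg]; push_neg; exact h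
    refine ⟨h, hμ, ?_⟩
    intro w hw
    obtain ⟨z, hzA, hzw⟩ := Finset.mem_image.1 hw
    rw [← hzw, sq_im_eq]
    simp [h z hzA]

open Classical in
/-- There is a choice of real shifts, following the rule "shift by `−Re s` for some
non-real point `s` of the current set if one exists, otherwise shift by `0`", such
that after `ν = |S|` shift-and-square steps the image of `S` is real; moreover at each
step `j` the number of non-real points is at most `ν − j`. -/
theorem fold_to_real (S : Finset ℂ) :
    ∃ μ : ℕ → ℝ,
      (∀ j < S.card,
        (∃ s ∈ Sseq μ S j, s.im ≠ 0 ∧ μ j = -s.re) ∨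
        ((∀ s ∈ Sseq μ S j, s.im = 0) ∧ μ j = 0)) ∧
      (∀ j ≤ S.card, ((Sseq μ S j).filter (fun z => z.im ≠ 0)).card ≤ S.card - j) ∧
      (∀ z ∈ Sseq μ S S.card, z.im = 0) := by
  refine ⟨fun k => stepShift (Tseq S k), ?_, ?_, ?_⟩
  · intro j _
    rw [Sseq_eq_Tseq]
    by_cases h : ∃ s ∈ Tseq S j, s.im ≠ 0
    · left
      obtain ⟨hs, him⟩ := h.choose_spec
      exact ⟨h.choose, hs, him, by simp only [stepShift]; rw [dif_pos h]⟩
    · right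
      push_neg at h
      exact ⟨h, by simp only [stepShift]; rw [dif_neg]; push_neg; exact h⟩
  · intro j hj
    rw [Sseq_eq_Tseq]
    induction j with
    | zero =>
      simpa [Tseq] using Finset.card_le_card (Finset.filter_subset _ S)
    | succ j ih =>
      have ih' := ih (Nat.le_of_succ_le hj)
      rcases key_step (Tseq S j) with h | ⟨_, _, h⟩
      · have : ((Tseq S (j+1)).filter (fun z => z.im ≠ 0)).card + 1 ≤ S.card - j := by
          exact le_trans h ih'
        omega
      · have : (Tseq S (j+1)).filter (fun z => z.im ≠ 0) = ∅ :=
          Finset.filter_eq_empty_iff.2 (fun {z} hz => not_not.2 (h z hz))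
        simp [this]
  · intro z hz
    rw [Sseq_eq_Tseq] at hz
    by_contra him
    have hcard : 1 ≤ ((Tseq S S.card).filter (fun w => w.im ≠ 0)).card :=
      Finset.card_pos.2 ⟨z, Finset.mem_filter.2 ⟨hz, him⟩⟩
    -- reuse the bound
    have hb : ((Tseq S S.card).filter (fun w => w.im ≠ 0)).card ≤ S.card - S.card := by
      have key : ∀ j ≤ S.card, ((Tseq S j).filter (fun w => w.im ≠ 0)).card ≤ S.card - j := by
        intro j hj
        induction j with
        | zero => simpa [Tseq] using Finset.card_le_card (Finset.filter_subset _ S)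
        | succ j ih =>
          have ih' := ih (Nat.le_of_succ_le hj)
          rcases key_step (Tseq S j) with h | ⟨_, _, h⟩
          · have h2 : ((Tseq S (j+1)).filter (fun w => w.im ≠ 0)).card + 1 ≤
                ((Tseq S j).filter (fun w => w.im ≠ 0)).card := h
            omega
          · have : (Tseq S (j+1)).filter (fun w => w.im ≠ 0) = ∅ :=
              Finset.filter_eq_empty_iff.2 (fun {w} hw => not_not.2 (h w hw))
            simp [this]
      exact key S.card le_rfl
    omega
end
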